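/- Every finite connected simple graph with at least two vertices that is {P4, C4}-free has a universal vertex; equivalently, if G is connected, has no induced path on four vertices and no induced cycle on four vertices, then some vertex of G is adjacent to all other vertices. -/

import Mathlib

open SimpleGraph

/-- `G` is `H`-free: no induced subgraph of `G` is isomorphic to `H`
(an induced copy is a graph embedding). -/
def InducedFree {α β : Type*} (H : SimpleGraph β) (G : SimpleGraph α) : Prop :=
  ¬ Nonempty (H ↪g G)

/-- The path on four vertices. -/
def P4 : SimpleGraph (Fin 4) := fromEdgeSet {s(0,1), s(1,2), s(2,3)}

/-- The cycle on four vertices. -/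
def C4 : SimpleGraph (Fin 4) := fromEdgeSet {s(0,1), s(1,2), s(2,3), s(3,0)}

/-!
Take a vertex `u` of maximum degree and suppose some `w ≠ u` is not adjacent to it. Since `G`
is `P4`-free and connected, `u` and `w` have a common neighbour `x`. Every other neighbour `y`
of `u` is adjacent to `x`, for otherwise `w x u y` induces a `C4` or a `P4`. Hence `x` is
adjacent to `u`, to `w` and to all neighbours of `u` but itself, so `deg x > deg u`.
-/

open Finset

def inducedP4Embedding {V : Type*} (G : SimpleGraph V) {a b c d : V}
    (hab : G.Adj a b) (hbc : G.Adj b c) (hcd : G.Adj c d)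
    (hac : ¬G.Adj a c) (had : ¬G.Adj a d) (hbd : ¬G.Adj b d)
    (hac' : a ≠ c) (had' : a ≠ d) (hbd' : b ≠ d) : P4 ↪g G where
  toFun := ![a, b, c, d]
  inj' := by
    have h₁ := hab.ne; have h₂ := hbc.ne; have h₃ := hcd.ne
    intro i j hij
    fin_cases i <;> fin_cases j <;> simp_all
  map_rel_iff' := by
    have h₁ := hab.symm; have h₂ := hbc.symm; have h₃ := hcd.symm
    have n₁ : ¬G.Adj c a := fun h => hac h.symm
    have n₂ : ¬G.Adj d a := fun h => had h.symm
    have n₃ : ¬G.Adj d b := fun h => hbd h.symm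
    intro i j
    change G.Adj (![a, b, c, d] i) (![a, b, c, d] j) ↔ P4.Adj i j
    fin_cases i <;> fin_cases j <;> simp_all [P4]

def inducedC4Embedding {V : Type*} (G : SimpleGraph V) {a b c d : V}
    (hab : G.Adj a b) (hbc : G.Adj b c) (hcd : G.Adj c d) (hda : G.Adj d a)
    (hac : ¬G.Adj a c) (hbd : ¬G.Adj b d) (hac' : a ≠ c) (hbd' : b ≠ d) : C4 ↪g G where
  toFun := ![a, b, c, d]
  inj' := by
    have h₁ := hab.ne; have h₂ := hbc.ne; have h₃ := hcd.ne; have h₄ := hda.ne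
    intro i j hij
    fin_cases i <;> fin_cases j <;> simp_all
  map_rel_iff' := by
    have h₁ := hab.symm; have h₂ := hbc.symm; have h₃ := hcd.symm; have h₄ := hda.symm
    have n₁ : ¬G.Adj c a := fun h => hac h.symm
    have n₃ : ¬G.Adj d b := fun h => hbd h.symm
    intro i j
    change G.Adj (![a, b, c, d] i) (![a, b, c, d] j) ↔ C4.Adj i j
    fin_cases i <;> fin_cases j <;> simp_all [C4]

section

variable {V : Type*} {G : SimpleGraph V}

theorem InducedFree.exists_common_neighbor_of_walk (hP4 : InducedFree P4 G) {u w : V}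
    (p : G.Walk u w) (huw : ¬G.Adj u w) (hne : u ≠ w) : ∃ x, G.Adj u x ∧ G.Adj x w := by
  induction p with
  | nil => exact absurd rfl hne
  | @cons a b w hab q ih =>
    by_cases hbw : b = w
    · subst hbw; exact absurd hab huw
    by_cases hbw' : G.Adj b w
    · exact ⟨b, hab, hbw'⟩
    obtain ⟨y, hby, hyw⟩ := ih hbw' hbw
    by_cases hay : G.Adj a y
    · exact ⟨y, hay, hyw⟩
    have hay' : a ≠ y := fun h => huw (h ▸ hyw)
    exact (hP4 ⟨inducedP4Embedding G hab hby hyw hay huw hbw' hay' hne hbw⟩).elim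

theorem adj_of_adj_of_common_neighbor (hP4 : InducedFree P4 G) (hC4 : InducedFree C4 G)
    {u w x y : V} (hux : G.Adj u x) (hxw : G.Adj x w) (huw : ¬G.Adj u w) (hwu : w ≠ u)
    (huy : G.Adj u y) (hyx : y ≠ x) : G.Adj x y := by
  by_contra hxy
  have hwu' : ¬G.Adj w u := fun h => huw h.symm
  by_cases hwy : G.Adj w y
  · exact hC4 ⟨inducedC4Embedding G hxw.symm hux.symm huy hwy.symm hwu' hxy hwu hyx.symm⟩
  · have hwy' : w ≠ y := fun h => huw (h ▸ huy)
    exact hP4 ⟨inducedP4Embedding G hxw.symm hux.symm huy hwu' hwy hxy hwu hwy' hyx.symm⟩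

/-- `(insert u (N u)).erase x` has `deg u` elements, lies in `N x` and misses `w ∈ N x`. -/
theorem degree_lt_of_adj_of_forall_adj [G.LocallyFinite] [DecidableEq V] {u w x : V}
    (hux : G.Adj u x) (hxw : G.Adj x w) (huw : ¬G.Adj u w) (hwu : w ≠ u)
    (hN : ∀ y, G.Adj u y → y ≠ x → G.Adj x y) : G.degree u < G.degree x := by
  set s := (insert u (G.neighborFinset u)).erase x
  have hs : #s = G.degree u := by
    rw [card_erase_of_mem (mem_insert_of_mem ((G.mem_neighborFinset u x).2 hux)),
      card_insert_of_notMem (G.notMem_neighborFinset_self u), card_neighborFinset_eq_degree,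
      Nat.add_sub_cancel]
  have hsub : s ⊆ G.neighborFinset x := by
    intro y hy
    simp only [s, mem_erase, mem_insert, mem_neighborFinset] at hy ⊢
    obtain ⟨hyx, rfl | huy⟩ := hy
    · exact hux.symm
    · exact hN y huy hyx
  have hw : w ∉ s := by
    simp only [s, mem_erase, mem_insert, mem_neighborFinset, not_and, not_or]
    exact fun _ => ⟨hwu, huw⟩
  rw [← hs, ← card_neighborFinset_eq_degree]
  exact card_lt_card ((ssubset_iff_of_subset hsub).2 ⟨w, (G.mem_neighborFinset x w).2 hxw, hw⟩)

end

theorem trivially_perfect_universal_general {V : Type*} [Fintype V] (G : SimpleGraph V)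
    (hconn : G.Connected)
    (hP4 : InducedFree P4 G) (hC4 : InducedFree C4 G) :
    ∃ u : V, ∀ v : V, v ≠ u → G.Adj u v := by
  classical
  have := hconn.nonempty
  obtain ⟨u, hmax⟩ := Finite.exists_max (G.degree ·)
  refine ⟨u, fun w hwu => by_contra fun huw => ?_⟩
  obtain ⟨x, hux, hxw⟩ :=
    hP4.exists_common_neighbor_of_walk (hconn u w).some huw (Ne.symm hwu)
  have hlt := degree_lt_of_adj_of_forall_adj hux hxw huw hwu
    fun y huy hyx => adj_of_adj_of_common_neighbor hP4 hC4 hux hxw huw hwu huy hyx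
  exact (hmax x).not_gt hlt

theorem trivially_perfect_universal {V : Type*} [Fintype V] (G : SimpleGraph V)
    (hconn : G.Connected) (hcard : 2 ≤ Fintype.card V)
    (hP4 : InducedFree P4 G) (hC4 : InducedFree C4 G) :
    ∃ u : V, ∀ v : V, v ≠ u → G.Adj u v :=
  trivially_perfect_universal_general G hconn hP4 hC4
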